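/- The function h(η) = (f(η) + η)(2 f(η) + η), with f(η) = (1/√π) · exp(−η²)/(1 + erf(η)), is strictly increasing on [0, ∞); in particular h(η) > 1/2 for all η ≥ 0. -/

import Mathlib

open Real

noncomputable def erf (z : ℝ) : ℝ := (2 / Real.sqrt π) * ∫ s in (0:ℝ)..z, Real.exp (-s^2)

noncomputable def f (η : ℝ) : ℝ := (1 / Real.sqrt π) * Real.exp (-η^2) / (1 + erf η)

noncomputable def g (η : ℝ) : ℝ := 1 - 2 * f η * (f η + η)

noncomputable def hfun (η : ℝ) : ℝ := (f η + η) * (2 * f η + η)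

/-!
Since `h' = (4g - 1) f + (3g - 1) η` and `f > 0`, `h` increases on `[0, ∞)` as soon as `g > 1/3`
there, i.e. `f (f + η) < 1/3`. Bounding the integrand of `erf η` below by `exp (-η²)` and
`exp (η²)` below by `1 + η²` gives `1 / f η ≥ L := √π (1 + η²) + 2η`, and this crude
estimate suffices: `f (f + η) < 1/3` follows from `L² - 3ηL - 3 > 0`, a polynomial in `η` with
nonnegative coefficients and constant term `π - 3`. Finally `h 0 = 2/π > 1/2`.
-/

lemma continuous_exp_neg_sq : Continuous fun s : ℝ => exp (-s ^ 2) := by fun_prop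

lemma two_div_sqrt_pi_mul_mul_exp_neg_sq_le_erf {η : ℝ} (hη : 0 ≤ η) :
    2 / √π * (η * exp (-η ^ 2)) ≤ erf η := by
  have hint : η * exp (-η ^ 2) ≤ ∫ s in (0:ℝ)..η, exp (-s ^ 2) := by
    simpa using intervalIntegral.integral_mono_on (μ := MeasureTheory.volume) hη
      intervalIntegrable_const (continuous_exp_neg_sq.intervalIntegrable 0 η) fun s hs => by
        rw [exp_le_exp, neg_le_neg_iff]; exact pow_le_pow_left₀ hs.1 hs.2 2
  unfold erf
  gcongr

lemma erf_nonneg {η : ℝ} (hη : 0 ≤ η) : 0 ≤ erf η :=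
  le_trans (by positivity) (two_div_sqrt_pi_mul_mul_exp_neg_sq_le_erf hη)

lemma erf_zero : erf 0 = 0 := by simp [erf]

lemma f_pos {η : ℝ} (hη : 0 ≤ η) : 0 < f η := by
  have := erf_nonneg hη
  unfold f
  positivity

lemma f_mul_le_one {η : ℝ} (hη : 0 ≤ η) : f η * (√π * (1 + η ^ 2) + 2 * η) ≤ 1 := by
  have hexp : exp (-η ^ 2) * (1 + η ^ 2) ≤ 1 := by
    have hinv : exp (-η ^ 2) * exp (η ^ 2) = 1 := by rw [← exp_add]; simp
    nlinarith [add_one_le_exp (η ^ 2)]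
  have hsplit : 1 / √π * exp (-η ^ 2) * (√π * (1 + η ^ 2) + 2 * η)
      = exp (-η ^ 2) * (1 + η ^ 2) + 2 / √π * (η * exp (-η ^ 2)) := by
    field_simp
  rw [f, div_mul_eq_mul_div, div_le_one (by linarith [erf_nonneg hη]), hsplit]
  linarith [two_div_sqrt_pi_mul_mul_exp_neg_sq_le_erf hη]

lemma one_third_lt_g {η : ℝ} (hη : 0 ≤ η) : 1 / 3 < g η := by
  have hf := f_pos hη
  set L := √π * (1 + η ^ 2) + 2 * η
  have hL0 : 0 < L := by positivity
  have hmargin : 0 < L ^ 2 - 3 * η * L - 3 := by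
    have hexpand : L ^ 2 - 3 * η * L - 3
        = (π - 3) + (2 * π - 2) * η ^ 2 + π * η ^ 4 + √π * η * (1 + η ^ 2) := by
      linear_combination (1 + η ^ 2) ^ 2 * sq_sqrt pi_pos.le
    have h3 := pi_gt_three
    have heven : 0 ≤ (2 * π - 2) * η ^ 2 := mul_nonneg (by linarith) (sq_nonneg η)
    have hquartic : 0 ≤ π * η ^ 4 := by positivity
    have hodd : 0 ≤ √π * η * (1 + η ^ 2) := by positivity
    linarith
  unfold g
  nlinarith [f_mul_le_one hη, mul_pos hf hL0]

lemma hasDerivAt_erf (x : ℝ) : HasDerivAt erf (2 / √π * exp (-x ^ 2)) x :=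
  (intervalIntegral.integral_hasDerivAt_right (continuous_exp_neg_sq.intervalIntegrable 0 x)
    (continuous_exp_neg_sq.stronglyMeasurableAtFilter _ _)
    continuous_exp_neg_sq.continuousAt).const_mul _

lemma hasDerivAt_f {x : ℝ} (hx : 0 ≤ x) : HasDerivAt f (-2 * f x * (f x + x)) x := by
  have hden : 1 + erf x ≠ 0 := by linarith [erf_nonneg hx]
  have hnum : HasDerivAt (fun u => 1 / √π * exp (-u ^ 2))
      (1 / √π * (exp (-x ^ 2) * -(2 * x))) x :=
    ((hasDerivAt_pow 2 x).neg.exp.const_mul _).congr_deriv (by simp)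
  refine (hnum.div ((hasDerivAt_erf x).const_add 1) hden).congr_deriv ?_
  unfold f
  field_simp
  ring

lemma hasDerivAt_hfun {x : ℝ} (hx : 0 ≤ x) :
    HasDerivAt hfun ((4 * g x - 1) * f x + (3 * g x - 1) * x) x := by
  have hf := hasDerivAt_f hx
  refine ((hf.add (hasDerivAt_id x)).mul ((hf.const_mul 2).add (hasDerivAt_id x))).congr_deriv ?_
  simp only [g, Pi.add_apply, id]
  ring

lemma hfun_strictMonoOn : StrictMonoOn hfun (Set.Ici 0) := by
  refine strictMonoOn_of_hasDerivWithinAt_pos (convex_Ici 0)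
    (fun x hx => (hasDerivAt_hfun hx).continuousAt.continuousWithinAt)
    (fun x hx => (hasDerivAt_hfun (interior_subset hx)).hasDerivWithinAt) fun x hx => ?_
  rw [interior_Ici] at hx
  have hg := one_third_lt_g hx.out.le
  have hf := f_pos hx.out.le
  nlinarith [hx.out]

lemma hfun_zero : hfun 0 = 2 / π := by
  have hs : √π ^ 2 = π := sq_sqrt pi_pos.le
  simp only [hfun, f, erf_zero]
  field_simp
  simp [hs, mul_comm]

theorem stmt5 : StrictMonoOn hfun (Set.Ici (0:ℝ)) ∧ ∀ η : ℝ, 0 ≤ η → 1 / 2 < hfun η := by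
  refine ⟨hfun_strictMonoOn, fun η hη => ?_⟩
  calc 1 / 2 < 2 / π := by rw [div_lt_div_iff₀ two_pos pi_pos]; linarith [pi_lt_four]
    _ = hfun 0 := hfun_zero.symm
    _ ≤ hfun η := hfun_strictMonoOn.monotoneOn Set.self_mem_Ici hη hη
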